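/- Let Ω be a probability space and let Q, X, X_R, Y be measurable random variables on Ω taking values in finite (nonempty, measurable-singleton) types, such that Y is conditionally independent of X given the pair (Q, X_R). If moreover H[X_R | ⟨X, Q⟩] = H[X_R | ⟨X, Q, Y⟩] (observing the summary Y provides no additional information about which sentences are relevant beyond the input and the query), then H[Y | ⟨Q, X⟩] = H[Y | ⟨Q, X_R⟩], i.e. the direct model and the extract-then-generate model achieve the same expected negative log-likelihood. -/
import Mathlib


open MeasureTheory ProbabilityTheory

/-- Shannon entropy of a random variable `X` taking values in a finite type,
computed from its distribution `μ.map X`. -/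
noncomputable def ent {Ω α : Type*} [MeasurableSpace Ω] [MeasurableSpace α] [Fintype α]
    (μ : Measure Ω) (X : Ω → α) : ℝ :=
  - ∑ a : α, ((μ.map X) {a}).toReal * Real.log ((μ.map X) {a}).toReal

/-- Conditional entropy `H[X | Y] = H[⟨X, Y⟩] - H[Y]`. -/
noncomputable def condEnt {Ω α β : Type*} [MeasurableSpace Ω]
    [MeasurableSpace α] [Fintype α] [MeasurableSpace β] [Fintype β]
    (μ : Measure Ω) (X : Ω → α) (Y : Ω → β) : ℝ :=
  ent μ (fun ω => (X ω, Y ω)) - ent μ Y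

/-- Mutual information `I[X : Y] = H[X] + H[Y] - H[⟨X, Y⟩]`. -/
noncomputable def mutInfo {Ω α β : Type*} [MeasurableSpace Ω]
    [MeasurableSpace α] [Fintype α] [MeasurableSpace β] [Fintype β]
    (μ : Measure Ω) (X : Ω → α) (Y : Ω → β) : ℝ :=
  ent μ X + ent μ Y - ent μ (fun ω => (X ω, Y ω))

/-- Conditional mutual information `I[X : Y | Z] = H[X | Z] - H[X | ⟨Y, Z⟩]`. -/
noncomputable def condMutInfo {Ω α β γ : Type*} [MeasurableSpace Ω]
    [MeasurableSpace α] [Fintype α] [MeasurableSpace β] [Fintype β]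
    [MeasurableSpace γ] [Fintype γ]
    (μ : Measure Ω) (X : Ω → α) (Y : Ω → β) (Z : Ω → γ) : ℝ :=
  condEnt μ X Z - condEnt μ X (fun ω => (Y ω, Z ω))

/-- `Y` is conditionally independent of `X` given `Z` (elementary definition for
finitely-valued random variables): for all values,
`P(Y = y, Z = z) * P(X = x, Z = z) = P(Y = y, X = x, Z = z) * P(Z = z)`. -/
def CondIndepGiven {Ω α β γ : Type*} [MeasurableSpace Ω]
    (μ : Measure Ω) (Y : Ω → γ) (X : Ω → α) (Z : Ω → β) : Prop :=
  ∀ (y : γ) (x : α) (z : β),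
    μ {ω | Y ω = y ∧ Z ω = z} * μ {ω | X ω = x ∧ Z ω = z} =
      μ {ω | Y ω = y ∧ X ω = x ∧ Z ω = z} * μ {ω | Z ω = z}


section aux
variable {Ω α β γ : Type*} [MeasurableSpace Ω]

lemma ent_eq_sum [MeasurableSpace α] [Fintype α] [MeasurableSingletonClass α]
    (μ : Measure Ω) (A : Ω → α) (hA : Measurable A) :
    ent μ A = - ∑ a : α, (μ {ω | A ω = a}).toReal * Real.log (μ {ω | A ω = a}).toReal := by
  unfold ent
  congr 1
  refine Finset.sum_congr rfl fun a _ => ?_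
  rw [Measure.map_apply hA (measurableSet_singleton a)]
  rfl

lemma ent_comp_equiv [MeasurableSpace α] [Fintype α] [MeasurableSingletonClass α]
    [MeasurableSpace β] [Fintype β] [MeasurableSingletonClass β]
    (μ : Measure Ω) (A : Ω → α) (hA : Measurable A) (e : α ≃ β) :
    ent μ (fun ω => e (A ω)) = ent μ A := by
  have hE : Measurable (fun ω => e (A ω)) := (measurable_of_countable (e : α → β)).comp hA
  rw [ent_eq_sum μ _ hE, ent_eq_sum μ A hA]
  congr 1
  refine (Fintype.sum_equiv e _ _ fun a => ?_).symm
  have : {ω | e (A ω) = e a} = {ω | A ω = a} := by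
    ext ω; simp [e.injective.eq_iff]
  rw [this]

lemma sum_fiber [MeasurableSpace α] [Fintype α] [MeasurableSingletonClass α]
    (μ : Measure Ω) (A : Ω → α) (hA : Measurable A) (s : Set Ω) (hs : MeasurableSet s) :
    ∑ a : α, μ ({ω | A ω = a} ∩ s) = μ s := by
  have h1 : (⋃ a : α, ({ω | A ω = a} ∩ s)) = s := by
    ext ω; simp
  have h2 : Pairwise (Function.onFun Disjoint fun a : α => ({ω | A ω = a} ∩ s)) := by
    intro a b hab
    refine Set.disjoint_left.2 fun ω h1 h2 => hab ?_
    rw [← h1.1, ← h2.1]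
  conv_rhs => rw [← h1]
  rw [measure_iUnion h2 fun a => ((hA (measurableSet_singleton a)).inter hs), tsum_fintype]

lemma sum3_comm {M : Type*} [AddCommMonoid M] {ι κ ν : Type*} [Fintype ι] [Fintype κ] [Fintype ν]
    (f : ι → κ → ν → M) :
    ∑ a : ι, ∑ b : κ, ∑ c : ν, f a b c = ∑ c : ν, ∑ a : ι, ∑ b : κ, f a b c := by
  have h1 : ∀ a : ι, ∑ b : κ, ∑ c : ν, f a b c = ∑ c : ν, ∑ b : κ, f a b c := fun a =>
    Finset.sum_comm
  simp_rw [h1]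
  exact Finset.sum_comm

lemma ci_ent [MeasurableSpace α] [Fintype α] [MeasurableSingletonClass α]
    [MeasurableSpace β] [Fintype β] [MeasurableSingletonClass β]
    [MeasurableSpace γ] [Fintype γ] [MeasurableSingletonClass γ]
    (μ : Measure Ω) [IsFiniteMeasure μ]
    (Y : Ω → γ) (X : Ω → α) (Z : Ω → β)
    (hY : Measurable Y) (hX : Measurable X) (hZ : Measurable Z)
    (hCI : CondIndepGiven μ Y X Z) :
    ent μ (fun ω => (Y ω, (X ω, Z ω))) + ent μ Z
      = ent μ (fun ω => (Y ω, Z ω)) + ent μ (fun ω => (X ω, Z ω)) := by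
  classical
  set p3 : γ → α → β → ℝ := fun y x z => (μ {ω | Y ω = y ∧ X ω = x ∧ Z ω = z}).toReal with hp3
  set pyz : γ → β → ℝ := fun y z => (μ {ω | Y ω = y ∧ Z ω = z}).toReal with hpyz
  set pxz : α → β → ℝ := fun x z => (μ {ω | X ω = x ∧ Z ω = z}).toReal with hpxz
  set pz : β → ℝ := fun z => (μ {ω | Z ω = z}).toReal with hpz
  -- entropy formulas
  have e3 : ent μ (fun ω => (Y ω, (X ω, Z ω)))
      = - ∑ y : γ, ∑ x : α, ∑ z : β, p3 y x z * Real.log (p3 y x z) := by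
    rw [ent_eq_sum μ _ ((hY.prodMk (hX.prodMk hZ)))]
    simp only [Fintype.sum_prod_type]
    congr 1
    refine Finset.sum_congr rfl fun y _ => Finset.sum_congr rfl fun x _ =>
      Finset.sum_congr rfl fun z _ => ?_
    have : {ω | (Y ω, (X ω, Z ω)) = (y, (x, z))} = {ω | Y ω = y ∧ X ω = x ∧ Z ω = z} := by
      ext ω; simp [Prod.ext_iff, and_assoc]
    rw [this]
  have eyz : ent μ (fun ω => (Y ω, Z ω))
      = - ∑ y : γ, ∑ z : β, pyz y z * Real.log (pyz y z) := by
    rw [ent_eq_sum μ _ (hY.prodMk hZ)]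
    simp only [Fintype.sum_prod_type]
    congr 1
    refine Finset.sum_congr rfl fun y _ => Finset.sum_congr rfl fun z _ => ?_
    have : {ω | (Y ω, Z ω) = (y, z)} = {ω | Y ω = y ∧ Z ω = z} := by
      ext ω; simp [Prod.ext_iff]
    rw [this]
  have exz : ent μ (fun ω => (X ω, Z ω))
      = - ∑ x : α, ∑ z : β, pxz x z * Real.log (pxz x z) := by
    rw [ent_eq_sum μ _ (hX.prodMk hZ)]
    simp only [Fintype.sum_prod_type]
    congr 1
    refine Finset.sum_congr rfl fun x _ => Finset.sum_congr rfl fun z _ => ?_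
    have : {ω | (X ω, Z ω) = (x, z)} = {ω | X ω = x ∧ Z ω = z} := by
      ext ω; simp [Prod.ext_iff]
    rw [this]
  have ez : ent μ Z = - ∑ z : β, pz z * Real.log (pz z) := ent_eq_sum μ Z hZ
  -- marginal identities
  have hm1 : ∀ (y : γ) (z : β), ∑ x : α, p3 y x z = pyz y z := by
    intro y z
    have hs := sum_fiber μ X hX {ω | Y ω = y ∧ Z ω = z}
      ((hY (measurableSet_singleton y)).inter (hZ (measurableSet_singleton z)))
    calc ∑ x : α, p3 y x z
        = ∑ x : α, (μ ({ω | X ω = x} ∩ {ω | Y ω = y ∧ Z ω = z})).toReal := by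
          refine Finset.sum_congr rfl fun x _ => ?_
          simp only [hp3]
          have hset : {ω | Y ω = y ∧ X ω = x ∧ Z ω = z}
              = {ω | X ω = x} ∩ {ω | Y ω = y ∧ Z ω = z} := by
            ext ω; simp only [Set.mem_inter_iff, Set.mem_setOf_eq]; tauto
          rw [hset]
      _ = (∑ x : α, μ ({ω | X ω = x} ∩ {ω | Y ω = y ∧ Z ω = z})).toReal :=
          (ENNReal.toReal_sum fun _ _ => measure_ne_top μ _).symm
      _ = pyz y z := by rw [hs]
  have hm2 : ∀ (x : α) (z : β), ∑ y : γ, p3 y x z = pxz x z := by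
    intro x z
    have hs := sum_fiber μ Y hY {ω | X ω = x ∧ Z ω = z}
      ((hX (measurableSet_singleton x)).inter (hZ (measurableSet_singleton z)))
    calc ∑ y : γ, p3 y x z
        = ∑ y : γ, (μ ({ω | Y ω = y} ∩ {ω | X ω = x ∧ Z ω = z})).toReal := by
          refine Finset.sum_congr rfl fun y _ => ?_
          simp only [hp3]
          have hset : {ω | Y ω = y ∧ X ω = x ∧ Z ω = z}
              = {ω | Y ω = y} ∩ {ω | X ω = x ∧ Z ω = z} := rfl
          rw [hset]
      _ = (∑ y : γ, μ ({ω | Y ω = y} ∩ {ω | X ω = x ∧ Z ω = z})).toReal :=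
          (ENNReal.toReal_sum fun _ _ => measure_ne_top μ _).symm
      _ = pxz x z := by rw [hs]
  have hm3 : ∀ z : β, ∑ y : γ, pyz y z = pz z := by
    intro z
    have hs := sum_fiber μ Y hY {ω | Z ω = z} (hZ (measurableSet_singleton z))
    calc ∑ y : γ, pyz y z
        = ∑ y : γ, (μ ({ω | Y ω = y} ∩ {ω | Z ω = z})).toReal := by
          refine Finset.sum_congr rfl fun y _ => ?_
          simp only [hpyz]
          have hset : {ω | Y ω = y ∧ Z ω = z} = {ω | Y ω = y} ∩ {ω | Z ω = z} := by
            ext ω; simp only [Set.mem_inter_iff, Set.mem_setOf_eq]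
          rw [hset]
      _ = (∑ y : γ, μ ({ω | Y ω = y} ∩ {ω | Z ω = z})).toReal :=
          (ENNReal.toReal_sum fun _ _ => measure_ne_top μ _).symm
      _ = pz z := by rw [hs]
  have hm5 : ∀ z : β, ∑ y : γ, ∑ x : α, p3 y x z = pz z := by
    intro z
    rw [← hm3 z]
    exact Finset.sum_congr rfl fun y _ => hm1 y z
  -- pointwise key identity
  have hkey : ∀ (y : γ) (x : α) (z : β),
      p3 y x z * Real.log (p3 y x z) + p3 y x z * Real.log (pz z)
        = p3 y x z * Real.log (pyz y z) + p3 y x z * Real.log (pxz x z) := by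
    intro y x z
    by_cases h0 : p3 y x z = 0
    · rw [h0]; ring
    · have hpos3 : 0 < p3 y x z := lt_of_le_of_ne ENNReal.toReal_nonneg (Ne.symm h0)
      have hle1 : p3 y x z ≤ pyz y z :=
        ENNReal.toReal_mono (measure_ne_top μ _)
          (measure_mono fun ω hω => ⟨hω.1, hω.2.2⟩)
      have hle2 : p3 y x z ≤ pxz x z :=
        ENNReal.toReal_mono (measure_ne_top μ _)
          (measure_mono fun ω hω => ⟨hω.2.1, hω.2.2⟩)
      have hle3 : p3 y x z ≤ pz z :=
        ENNReal.toReal_mono (measure_ne_top μ _)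
          (measure_mono fun ω hω => hω.2.2)
      have hCIr : pyz y z * pxz x z = p3 y x z * pz z := by
        have h := congrArg ENNReal.toReal (hCI y x z)
        simpa [ENNReal.toReal_mul] using h
      have hlog : Real.log (pyz y z) + Real.log (pxz x z)
          = Real.log (p3 y x z) + Real.log (pz z) := by
        have h1 := congrArg Real.log hCIr
        rwa [Real.log_mul (ne_of_gt (lt_of_lt_of_le hpos3 hle1)) (ne_of_gt (lt_of_lt_of_le hpos3 hle2)),
          Real.log_mul (ne_of_gt hpos3) (ne_of_gt (lt_of_lt_of_le hpos3 hle3))] at h1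
      linear_combination (p3 y x z) * hlog.symm
  -- summed identity
  have key : (∑ z : β, ∑ y : γ, ∑ x : α, p3 y x z * Real.log (p3 y x z))
      + (∑ z : β, ∑ y : γ, ∑ x : α, p3 y x z * Real.log (pz z))
      = (∑ z : β, ∑ y : γ, ∑ x : α, p3 y x z * Real.log (pyz y z))
      + (∑ z : β, ∑ y : γ, ∑ x : α, p3 y x z * Real.log (pxz x z)) := by
    simp only [← Finset.sum_add_distrib]
    exact Finset.sum_congr rfl fun z _ => Finset.sum_congr rfl fun y _ =>
      Finset.sum_congr rfl fun x _ => hkey y x z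
  have hB : (∑ z : β, ∑ y : γ, ∑ x : α, p3 y x z * Real.log (pz z))
      = ∑ z : β, pz z * Real.log (pz z) := by
    refine Finset.sum_congr rfl fun z _ => ?_
    simp only [← Finset.sum_mul]
    rw [hm5]
  have hC : (∑ z : β, ∑ y : γ, ∑ x : α, p3 y x z * Real.log (pyz y z))
      = ∑ y : γ, ∑ z : β, pyz y z * Real.log (pyz y z) := by
    rw [Finset.sum_comm]
    refine Finset.sum_congr rfl fun y _ => Finset.sum_congr rfl fun z _ => ?_
    rw [← Finset.sum_mul, hm1]
  have hD : (∑ z : β, ∑ y : γ, ∑ x : α, p3 y x z * Real.log (pxz x z))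
      = ∑ x : α, ∑ z : β, pxz x z * Real.log (pxz x z) := by
    have h1 : ∀ z : β, (∑ y : γ, ∑ x : α, p3 y x z * Real.log (pxz x z))
        = ∑ x : α, pxz x z * Real.log (pxz x z) := by
      intro z
      rw [Finset.sum_comm]
      refine Finset.sum_congr rfl fun x _ => ?_
      rw [← Finset.sum_mul, hm2]
    simp_rw [h1]
    exact Finset.sum_comm
  have hA : (∑ y : γ, ∑ x : α, ∑ z : β, p3 y x z * Real.log (p3 y x z))
      = ∑ z : β, ∑ y : γ, ∑ x : α, p3 y x z * Real.log (p3 y x z) :=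
    sum3_comm _
  rw [e3, ez, eyz, exz]
  linarith [key, hA, hB, hC, hD]

end aux

variable {Ω TQ TX TR TY : Type*} [MeasurableSpace Ω]
  [MeasurableSpace TQ] [Fintype TQ] [Nonempty TQ] [MeasurableSingletonClass TQ]
  [MeasurableSpace TX] [Fintype TX] [Nonempty TX] [MeasurableSingletonClass TX]
  [MeasurableSpace TR] [Fintype TR] [Nonempty TR] [MeasurableSingletonClass TR]
  [MeasurableSpace TY] [Fintype TY] [Nonempty TY] [MeasurableSingletonClass TY]

/-- Zero-confounding characterization: under the Markov assumption `Y ⟂ X | (Q, X_R)`,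
if `H[X_R | ⟨X, Q⟩] = H[X_R | ⟨X, Q, Y⟩]` then the direct and extract-then-generate
models achieve the same expected negative log-likelihood:
`H[Y | ⟨Q, X⟩] = H[Y | ⟨Q, X_R⟩]`. -/
theorem stmt9 (μ : Measure Ω) [IsProbabilityMeasure μ]
    (Q : Ω → TQ) (X : Ω → TX) (XR : Ω → TR) (Y : Ω → TY)
    (hQ : Measurable Q) (hX : Measurable X) (hXR : Measurable XR) (hY : Measurable Y)
    (hCI : CondIndepGiven μ Y X (fun ω => (Q ω, XR ω)))
    (hzero : condEnt μ XR (fun ω => (X ω, Q ω)) = condEnt μ XR (fun ω => (X ω, Q ω, Y ω))) :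
    condEnt μ Y (fun ω => (Q ω, X ω)) = condEnt μ Y (fun ω => (Q ω, XR ω)) := by
  have hQX : Measurable (fun ω => (Q ω, X ω)) := hQ.prodMk hX
  have hQR : Measurable (fun ω => (Q ω, XR ω)) := hQ.prodMk hXR
  -- permutation equivalences
  have hA : ent μ (fun ω => (XR ω, (X ω, Q ω))) = ent μ (fun ω => (X ω, (Q ω, XR ω))) :=
    ent_comp_equiv μ (fun ω => (X ω, (Q ω, XR ω))) (hX.prodMk (hQ.prodMk hXR))
      ⟨fun p => (p.2.2, (p.1, p.2.1)), fun p => (p.2.1, (p.2.2, p.1)),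
        fun p => rfl, fun p => rfl⟩
  have hB : ent μ (fun ω => (X ω, Q ω)) = ent μ (fun ω => (Q ω, X ω)) :=
    ent_comp_equiv μ (fun ω => (Q ω, X ω)) hQX (Equiv.prodComm TQ TX)
  have hC : ent μ (fun ω => (XR ω, (X ω, Q ω, Y ω)))
      = ent μ (fun ω => (Y ω, (X ω, (Q ω, XR ω)))) :=
    ent_comp_equiv μ (fun ω => (Y ω, (X ω, (Q ω, XR ω))))
      (hY.prodMk (hX.prodMk (hQ.prodMk hXR)))
      ⟨fun p => (p.2.2.2, (p.2.1, (p.2.2.1, p.1))),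
        fun p => (p.2.2.2, (p.2.1, (p.2.2.1, p.1))), fun p => rfl, fun p => rfl⟩
  have hD : ent μ (fun ω => (X ω, (Q ω, Y ω))) = ent μ (fun ω => (Y ω, (Q ω, X ω))) :=
    ent_comp_equiv μ (fun ω => (Y ω, (Q ω, X ω))) (hY.prodMk (hQ.prodMk hX))
      ⟨fun p => (p.2.2, (p.2.1, p.1)), fun p => (p.2.2, (p.2.1, p.1)),
        fun p => rfl, fun p => rfl⟩
  have hci : ent μ (fun ω => (Y ω, (X ω, (Q ω, XR ω)))) + ent μ (fun ω => (Q ω, XR ω))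
      = ent μ (fun ω => (Y ω, (Q ω, XR ω))) + ent μ (fun ω => (X ω, (Q ω, XR ω))) :=
    ci_ent μ Y X (fun ω => (Q ω, XR ω)) hY hX hQR hCI
  simp only [condEnt] at hzero ⊢
  linarith [hzero, hA, hB, hC, hD, hci]
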